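/- arXiv:1903.02748 — 3 statements merged into one kernel-verified Lean document; each statement's English description precedes it below -/
import Mathlib

section
/- Let C be a doubly even binary code and θ : C × C → F_2 a code cocycle, i.e., θ satisfies (1) θ(v,w)+θ(u+v,w)+θ(u,v+w)+θ(u,v) = |u & v & w| mod 2, (2) θ(v,w)+θ(w,v) = (1/2)|v & w| mod 2, and (3) θ(v,v) = (1/4)|v| mod 2, for all u,v,w ∈ C. Then for any decomposition C = V ⊕ W into complementary subspaces and v1,v2 ∈ V, w1,w2 ∈ W: θ(v1+w1, v2+w2) = θ(v1,v2) + θ(w1,w2) + θ(v1,w1) + θ(w2,v2) + θ(v1+v2, w1+w2) + (1/2)|v2 & (w1+w2)| + |v1 & v2 & (w1+w2)| + |w1 & w2 & v2| + |v1 & w1 & (v2+w2)| mod 2. -/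
def wt {n : ℕ} (v : Fin n → ZMod 2) : ℕ := (Finset.univ.filter fun i => v i ≠ 0).card

def band {n : ℕ} (v w : Fin n → ZMod 2) : Fin n → ZMod 2 := fun i => v i * w i

/-!
For an arbitrary 2-cochain `θ` with values in characteristic two, `θ (v1 + w1) (v2 + w2)` equals
the right-hand side with the three triple-weight terms replaced by the coboundaries
`δθ (v1, v2, w1 + w2)`, `δθ (w1, w2, v2)`, `δθ (v1, w1, v2 + w2)` and the half-weight term by
`θ v2 (w1 + w2) + θ (w1 + w2) v2`: expanding the coboundaries, every other term occurs exactly twice.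
The cocycle identities then turn these into the intersection weights.
-/

namespace CodeCocycle

variable {M R : Type*} [AddCommMonoid M] [CommRing R] [CharP R 2]

/-- In characteristic two this is the group-cohomology coboundary `δθ (u, v, w)`. -/
def coboundary (θ : M → M → R) (u v w : M) : R :=
  θ v w + θ (u + v) w + θ u (v + w) + θ u v

theorem apply_add_add_eq (θ : M → M → R) (a b c d : M) :
    θ (a + b) (c + d) =
      θ a c + θ b d + θ a b + θ d c + θ (a + c) (b + d) + (θ c (b + d) + θ (b + d) c)
        + coboundary θ a c (b + d) + coboundary θ b d c + coboundary θ a b (c + d) := by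
  have hcbd : c + (b + d) = b + (c + d) := add_left_comm c b d
  have hdc : d + c = c + d := add_comm d c
  unfold coboundary
  rw [hcbd, hdc]
  linear_combination -(θ a c + θ b d + θ a b + θ d c + θ (a + c) (b + d) + θ c (b + d)
    + θ (b + d) c + θ a (b + (c + d)) + θ b (c + d)) * CharTwo.two_eq_zero (R := R)

end CodeCocycle

open CodeCocycle in
theorem stmt_11_general {n : ℕ} (C : Submodule (ZMod 2) (Fin n → ZMod 2))
    (θ : (Fin n → ZMod 2) → (Fin n → ZMod 2) → ZMod 2)
    (h1 : ∀ u ∈ C, ∀ v ∈ C, ∀ w ∈ C,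
      θ v w + θ (u + v) w + θ u (v + w) + θ u v = (wt (band u (band v w)) : ZMod 2))
    (h2 : ∀ v ∈ C, ∀ w ∈ C, θ v w + θ w v = ((wt (band v w) / 2 : ℕ) : ZMod 2))
    (V W : Submodule (ZMod 2) (Fin n → ZMod 2))
    (hV : V ≤ C) (hW : W ≤ C) :
    ∀ v1 ∈ V, ∀ v2 ∈ V, ∀ w1 ∈ W, ∀ w2 ∈ W,
      θ (v1 + w1) (v2 + w2) =
        θ v1 v2 + θ w1 w2 + θ v1 w1 + θ w2 v2 + θ (v1 + v2) (w1 + w2)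
        + ((wt (band v2 (w1 + w2)) / 2 : ℕ) : ZMod 2)
        + (wt (band v1 (band v2 (w1 + w2))) : ZMod 2)
        + (wt (band w1 (band w2 v2)) : ZMod 2)
        + (wt (band v1 (band w1 (v2 + w2))) : ZMod 2) := by
  intro v1 hv1 v2 hv2 w1 hw1 w2 hw2
  replace hv1 := hV hv1
  replace hv2 := hV hv2
  replace hw1 := hW hw1
  replace hw2 := hW hw2
  have hδ : ∀ u ∈ C, ∀ v ∈ C, ∀ w ∈ C,
      coboundary θ u v w = (wt (band u (band v w)) : ZMod 2) := h1
  rw [apply_add_add_eq θ v1 w1 v2 w2, h2 v2 hv2 _ (C.add_mem hw1 hw2),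
    hδ v1 hv1 v2 hv2 _ (C.add_mem hw1 hw2), hδ w1 hw1 w2 hw2 v2 hv2,
    hδ v1 hv1 w1 hw1 _ (C.add_mem hv2 hw2)]

theorem stmt_11 {n : ℕ} (C : Submodule (ZMod 2) (Fin n → ZMod 2))
    (hC : ∀ c ∈ C, 4 ∣ wt c)
    (θ : (Fin n → ZMod 2) → (Fin n → ZMod 2) → ZMod 2)
    (h1 : ∀ u ∈ C, ∀ v ∈ C, ∀ w ∈ C,
      θ v w + θ (u + v) w + θ u (v + w) + θ u v = (wt (band u (band v w)) : ZMod 2))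
    (h2 : ∀ v ∈ C, ∀ w ∈ C, θ v w + θ w v = ((wt (band v w) / 2 : ℕ) : ZMod 2))
    (h3 : ∀ v ∈ C, θ v v = ((wt v / 4 : ℕ) : ZMod 2))
    (V W : Submodule (ZMod 2) (Fin n → ZMod 2))
    (hV : V ≤ C) (hW : W ≤ C) (hsup : V ⊔ W = C) (hinf : V ⊓ W = ⊥) :
    ∀ v1 ∈ V, ∀ v2 ∈ V, ∀ w1 ∈ W, ∀ w2 ∈ W,
      θ (v1 + w1) (v2 + w2) =
        θ v1 v2 + θ w1 w2 + θ v1 w1 + θ w2 v2 + θ (v1 + v2) (w1 + w2)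
        + ((wt (band v2 (w1 + w2)) / 2 : ℕ) : ZMod 2)
        + (wt (band v1 (band v2 (w1 + w2))) : ZMod 2)
        + (wt (band w1 (band w2 v2)) : ZMod 2)
        + (wt (band v1 (band w1 (v2 + w2))) : ZMod 2) :=
  stmt_11_general C θ h1 h2 V W hV hW
end

section
/- Let C be a doubly even code and θ a code cocycle on C satisfying θ(0,v) = θ(v,0) = 0. Then the loop F_2 ×_θ C with operation (s,v)*(t,w) = (s+t+θ(v,w), v+w) satisfies the Moufang identity x*(y*(x*z)) = ((x*y)*x)*z for all x, y, z. -/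
lemma wt_cast {n : ℕ} (v : Fin n → ZMod 2) : ((wt v : ℕ) : ZMod 2) = ∑ i, v i := by
  unfold wt
  rw [Finset.card_filter]
  push_cast
  apply Finset.sum_congr rfl
  intro i _
  exact (by decide : ∀ a : ZMod 2, (if a ≠ 0 then (1 : ZMod 2) else 0) = a) (v i)

lemma wt_add_cast {n : ℕ} (v w : Fin n → ZMod 2) :
    ((wt (v + w) : ℕ) : ZMod 2) = (wt v : ZMod 2) + (wt w : ZMod 2) := by
  rw [wt_cast, wt_cast, wt_cast, ← Finset.sum_add_distrib]
  rfl

lemma wt_key {n : ℕ} (v w : Fin n → ZMod 2) :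
    wt (v + w) + 2 * wt (band v w) = wt v + wt w := by
  unfold wt band
  simp only [Finset.card_filter, Finset.mul_sum, ← Finset.sum_add_distrib, Pi.add_apply]
  apply Finset.sum_congr rfl
  intro i _
  exact (by decide : ∀ a b : ZMod 2,
    ((if a + b ≠ 0 then 1 else 0) + 2 * (if a * b ≠ 0 then 1 else 0) : ℕ) =
      (if a ≠ 0 then 1 else 0) + (if b ≠ 0 then 1 else 0)) (v i) (w i)

lemma wt_inter_even {n : ℕ} (v w : Fin n → ZMod 2)
    (hv : 4 ∣ wt v) (hw : 4 ∣ wt w) (hvw : 4 ∣ wt (v + w)) :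
    ((wt (band v w) : ℕ) : ZMod 2) = 0 := by
  rw [ZMod.natCast_eq_zero_iff]
  have := wt_key v w
  omega

theorem stmt_12 {n : ℕ} (C : Submodule (ZMod 2) (Fin n → ZMod 2))
    (hC : ∀ c : C, 4 ∣ wt (c : Fin n → ZMod 2))
    (θ : C → C → ZMod 2)
    (h1 : ∀ u v w : C,
      θ v w + θ (u + v) w + θ u (v + w) + θ u v =
        (wt (band (u : Fin n → ZMod 2) (band (v : Fin n → ZMod 2) (w : Fin n → ZMod 2))) : ZMod 2))
    (h2 : ∀ v w : C, θ v w + θ w v =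
      ((wt (band (v : Fin n → ZMod 2) (w : Fin n → ZMod 2)) / 2 : ℕ) : ZMod 2))
    (h3 : ∀ v : C, θ v v = ((wt (v : Fin n → ZMod 2) / 4 : ℕ) : ZMod 2))
    (h0l : ∀ v : C, θ 0 v = 0) (h0r : ∀ v : C, θ v 0 = 0)
    (mul : ZMod 2 × C → ZMod 2 × C → ZMod 2 × C)
    (hmul : ∀ p q, mul p q = (p.1 + q.1 + θ p.2 q.2, p.2 + q.2)) :
    ∀ x y z, mul x (mul y (mul x z)) = mul (mul (mul x y) x) z := by
  -- every element of C has order dividing 2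
  have haa : ∀ v : C, v + v = 0 := by
    intro v
    rw [← two_smul (ZMod 2) v, show ((2 : ZMod 2)) = 0 by decide, zero_smul]
  rintro ⟨s, a⟩ ⟨t, b⟩ ⟨u, c⟩
  simp only [hmul]
  have e1 : a + b + a = b := by rw [add_right_comm, haa, zero_add]
  have e2 : a + (b + (a + c)) = b + c := by
    have : a + (b + (a + c)) = (a + a) + (b + c) := by abel
    rw [this, haa, zero_add]
  have e3 : b + (a + c) = a + (b + c) := by abel
  rw [e1, e2, e3]
  -- key cocycle instances
  have H1 := h1 a b c
  have H2 := h1 b a c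
  rw [add_comm b a] at H2
  have H3 := h1 a a (b + c)
  rw [haa, h0l] at H3
  have H4 := h1 b a a
  rw [haa, h0r, add_comm b a] at H4
  -- weight identities
  have W1 : (wt (band (a : Fin n → ZMod 2) (band (b : Fin n → ZMod 2) (c : Fin n → ZMod 2))) : ZMod 2)
      = (wt (band (b : Fin n → ZMod 2) (band (a : Fin n → ZMod 2) (c : Fin n → ZMod 2))) : ZMod 2) := by
    have hb : band (a : Fin n → ZMod 2) (band (b : Fin n → ZMod 2) (c : Fin n → ZMod 2))
        = band (b : Fin n → ZMod 2) (band (a : Fin n → ZMod 2) (c : Fin n → ZMod 2)) := by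
      funext i
      simp only [band]
      ring
    rw [hb]
  have hb1 : band (a : Fin n → ZMod 2) (band (a : Fin n → ZMod 2) (((b + c : C)) : Fin n → ZMod 2))
      = band (a : Fin n → ZMod 2) (b : Fin n → ZMod 2) + band (a : Fin n → ZMod 2) (c : Fin n → ZMod 2) := by
    funext i
    simp only [band, Submodule.coe_add, Pi.add_apply]
    exact (by decide : ∀ x y z : ZMod 2, x * (x * (y + z)) = x * y + x * z) _ _ _
  have W2 : (wt (band (a : Fin n → ZMod 2) (band (a : Fin n → ZMod 2) (((b + c : C)) : Fin n → ZMod 2))) : ZMod 2)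
      = (wt (band (a : Fin n → ZMod 2) (b : Fin n → ZMod 2)) : ZMod 2)
        + (wt (band (a : Fin n → ZMod 2) (c : Fin n → ZMod 2)) : ZMod 2) := by
    rw [hb1, wt_add_cast]
  have W3 : (wt (band (b : Fin n → ZMod 2) (band (a : Fin n → ZMod 2) (a : Fin n → ZMod 2))) : ZMod 2)
      = (wt (band (a : Fin n → ZMod 2) (b : Fin n → ZMod 2)) : ZMod 2) := by
    have hb : band (b : Fin n → ZMod 2) (band (a : Fin n → ZMod 2) (a : Fin n → ZMod 2))
        = band (a : Fin n → ZMod 2) (b : Fin n → ZMod 2) := by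
      funext i
      exact (by decide : ∀ x y : ZMod 2, y * (x * x) = x * y) _ _
    rw [hb]
  have W4 : (wt (band (a : Fin n → ZMod 2) (c : Fin n → ZMod 2)) : ZMod 2) = 0 := by
    apply wt_inter_even _ _ (hC a) (hC c)
    have := hC (a + c)
    rwa [Submodule.coe_add] at this
  refine Prod.ext ?_ rfl
  simp only
  linear_combination H2 - H1 + H3 - H4 - W1 + W2 - W3 + W4
end

section
/- The extended binary Golay code basis given by the twelve vectors b_1,...,b_12 of Example 3 spans a 12-dimensional doubly even subspace of F_2^24: the twelve vectors are linearly independent and every F_2-linear combination has Hamming weight divisible by 4. -/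
/-- The twelve basis vectors b₁,...,b₁₂ of the extended binary Golay code from Example 3. -/
def golayBasis : Fin 12 → (Fin 24 → ZMod 2) :=
  ![
    ![0,0,0,1,1,0,0,0,0,0,0,0,0,1,0,1,1,0,1,0,0,0,1,1],
    ![1,0,1,0,0,1,1,1,1,1,0,1,1,0,1,1,1,1,1,1,0,0,0,1],
    ![0,0,0,1,0,0,0,0,0,0,0,0,1,0,0,1,0,0,1,1,1,1,1,0],
    ![0,1,0,0,0,0,0,0,0,0,1,0,0,0,0,1,1,0,1,0,1,1,0,1],
    ![0,0,0,0,0,0,0,0,0,0,1,0,0,1,0,1,0,1,0,1,0,1,1,1],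
    ![1,0,0,0,0,0,0,0,0,0,0,0,1,0,0,1,1,1,1,1,0,0,0,1],
    ![1,0,1,0,0,1,0,1,1,1,0,0,1,1,1,0,0,1,1,1,1,1,1,1],
    ![1,0,0,0,0,0,0,1,1,1,0,0,0,0,1,0,0,1,0,0,1,1,0,0],
    ![0,0,0,0,0,1,0,0,0,0,0,0,1,1,1,0,0,1,0,0,1,1,1,0],
    ![1,0,0,0,0,0,0,0,1,0,0,0,1,1,1,0,0,0,1,1,1,0,0,0],
    ![1,0,0,0,0,0,0,0,0,1,0,0,1,0,1,0,0,0,0,1,0,1,1,1],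
    ![0,1,1,0,1,1,0,0,0,0,0,1,1,1,1,0,1,1,1,1,1,1,1,1]]

namespace GolayAux

def supp {n : ℕ} (v : Fin n → ZMod 2) : Finset (Fin n) :=
  Finset.univ.filter fun i => v i ≠ 0

lemma wt_eq {n : ℕ} (v : Fin n → ZMod 2) : wt v = (supp v).card := rfl

lemma supp_zero {n : ℕ} : supp (0 : Fin n → ZMod 2) = ∅ := by
  simp [supp]

lemma supp_add {n : ℕ} (v w : Fin n → ZMod 2) :
    supp (v + w) = symmDiff (supp v) (supp w) := by
  ext j
  simp only [supp, Finset.mem_symmDiff, Finset.mem_filter, Finset.mem_univ, true_and,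
    Pi.add_apply]
  generalize v j = a
  generalize w j = b
  revert a b
  decide

lemma card_symmDiff {α : Type*} [DecidableEq α] (s t : Finset α) :
    (symmDiff s t).card + 2 * (s ∩ t).card = s.card + t.card := by
  rw [symmDiff_def, Finset.sup_eq_union, Finset.card_union_of_disjoint disjoint_sdiff_sdiff]
  have h1 := Finset.card_sdiff_add_card_inter s t
  have h2 := Finset.card_sdiff_add_card_inter t s
  rw [Finset.inter_comm t s] at h2
  omega

lemma zmod2_cases (a : ZMod 2) : a = 0 ∨ a = 1 := by revert a; decide

set_option maxHeartbeats 2000000 in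
lemma base_pairs : ∀ i j : Fin 12,
    Even ((supp (golayBasis i) ∩ supp (golayBasis j)).card) := by decide

set_option maxHeartbeats 2000000 in
lemma base_wt : ∀ i : Fin 12, 4 ∣ (supp (golayBasis i)).card := by decide

lemma even_inter :
    ∀ v ∈ Submodule.span (ZMod 2) (Set.range golayBasis),
    ∀ w ∈ Submodule.span (ZMod 2) (Set.range golayBasis),
      Even ((supp v ∩ supp w).card) := by
  intro v hv w hw
  induction hv, hw using Submodule.span_induction₂ with
  | mem_mem x y hx hy =>
      obtain ⟨i, rfl⟩ := hx
      obtain ⟨j, rfl⟩ := hy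
      exact base_pairs i j
  | zero_left y hy => simp [supp_zero]
  | zero_right x hx => simp [supp_zero]
  | add_left x y z hx hy hz h1 h2 =>
      have hd : supp (x + y) ∩ supp z = symmDiff (supp x ∩ supp z) (supp y ∩ supp z) := by
        rw [supp_add]
        simp only [← Finset.inf_eq_inter]
        rw [inf_symmDiff_distrib_right]
      rw [hd]
      have hc := card_symmDiff (supp x ∩ supp z) (supp y ∩ supp z)
      rw [Nat.even_iff] at h1 h2 ⊢
      omega
  | add_right x y z hx hy hz h1 h2 =>
      have hd : supp x ∩ supp (y + z) = symmDiff (supp x ∩ supp y) (supp x ∩ supp z) := by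
        rw [supp_add]
        simp only [← Finset.inf_eq_inter]
        rw [inf_symmDiff_distrib_left]
      rw [hd]
      have hc := card_symmDiff (supp x ∩ supp y) (supp x ∩ supp z)
      rw [Nat.even_iff] at h1 h2 ⊢
      omega
  | smul_left r x y hx hy h =>
      rcases zmod2_cases r with h0 | h1
      · simp [h0, supp_zero]
      · simpa [h1] using h
  | smul_right r x y hx hy h =>
      rcases zmod2_cases r with h0 | h1
      · simp [h0, supp_zero]
      · simpa [h1] using h

lemma four_dvd :
    ∀ v ∈ Submodule.span (ZMod 2) (Set.range golayBasis), 4 ∣ (supp v).card := by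
  intro v hv
  induction hv using Submodule.span_induction with
  | mem x hx => obtain ⟨i, rfl⟩ := hx; exact base_wt i
  | zero => simp [supp_zero]
  | add x y hx hy ihx ihy =>
      have he := even_inter x hx y hy
      have hc := card_symmDiff (supp x) (supp y)
      rw [supp_add]
      rw [Nat.even_iff] at he
      omega
  | smul r x hx ih =>
      rcases zmod2_cases r with h0 | h1
      · simp [h0, supp_zero]
      · simpa [h1] using ih

def colEmb : Fin 12 → Fin 24 := fun k => ⟨k.val, by omega⟩

def Nmat : Matrix (Fin 12) (Fin 12) (ZMod 2) :=
  Matrix.of fun i k => golayBasis i (colEmb k)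

def NInv : Matrix (Fin 12) (Fin 12) (ZMod 2) :=
  Matrix.of ![
    ![0,0,0,0,0,1,0,0,0,0,0,0],
    ![0,0,0,1,1,0,0,0,0,0,0,0],
    ![0,0,0,0,0,0,1,1,1,0,0,0],
    ![0,0,1,0,0,0,0,0,0,0,0,0],
    ![1,0,1,0,0,0,0,0,0,0,0,0],
    ![0,0,0,0,0,0,0,0,1,0,0,0],
    ![1,1,1,1,1,0,0,1,0,0,0,1],
    ![0,0,0,0,0,1,0,1,0,1,1,0],
    ![0,0,0,0,0,1,0,0,0,1,0,0],
    ![0,0,0,0,0,1,0,0,0,0,1,0],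
    ![0,0,0,0,1,0,0,0,0,0,0,0],
    ![1,0,1,1,1,0,1,1,0,0,0,1]]

set_option maxHeartbeats 4000000 in
lemma Nmat_mul_inv : Nmat * NInv = 1 := by decide

lemma golay_li : LinearIndependent (ZMod 2) golayBasis := by
  rw [Fintype.linearIndependent_iff]
  intro c hc
  have hvec : Matrix.vecMul c Nmat = 0 := by
    funext k
    have h := congrFun hc (colEmb k)
    simp only [Finset.sum_apply, Pi.smul_apply, smul_eq_mul, Pi.zero_apply] at h
    simpa [Matrix.vecMul, dotProduct, Nmat] using h
  have : c = 0 := by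
    calc c = Matrix.vecMul c 1 := (Matrix.vecMul_one c).symm
    _ = Matrix.vecMul c (Nmat * NInv) := by rw [Nmat_mul_inv]
    _ = Matrix.vecMul (Matrix.vecMul c Nmat) NInv := (Matrix.vecMul_vecMul ..).symm
    _ = Matrix.vecMul 0 NInv := by rw [hvec]
    _ = 0 := Matrix.zero_vecMul _
  intro i; rw [this]; rfl

end GolayAux

theorem stmt_19 :
    LinearIndependent (ZMod 2) golayBasis ∧
    ∀ v ∈ Submodule.span (ZMod 2) (Set.range golayBasis), 4 ∣ wt v := by
  exact ⟨GolayAux.golay_li, fun v hv => GolayAux.four_dvd v hv⟩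
end
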